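/- Let Ω be a finite set, F_q a finite field, C a linear subspace of F_q^Ω, and r a prime different from the characteristic of F_q. Then every Sylow r-subgroup of PAut(C) is 2-closed. -/

import Mathlib

def permAct {Ω F : Type*} (g : Equiv.Perm Ω) (f : Ω → F) : Ω → F :=
  fun ω => f (g.symm ω)

/-- The permutation automorphism group of a linear code `C ≤ F^Ω`:
all `g ∈ Sym(Ω)` with `C^g = C`. -/
def PAut {Ω F : Type*} [Field F] (C : Submodule F (Ω → F)) : Subgroup (Equiv.Perm Ω) where
  carrier := {g | permAct g '' (C : Set (Ω → F)) = C}
  one_mem' := by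
    show permAct (1 : Equiv.Perm Ω) '' (C : Set (Ω → F)) = C
    have : (permAct (1 : Equiv.Perm Ω) : (Ω → F) → Ω → F) = id := rfl
    rw [this, Set.image_id]
  mul_mem' := by
    intro a b ha hb
    show permAct (a * b) '' (C : Set (Ω → F)) = C
    have h : (permAct (a * b) : (Ω → F) → Ω → F) = permAct a ∘ permAct b := rfl
    rw [h, Set.image_comp, hb, ha]
  inv_mem' := by
    intro a ha
    show permAct a⁻¹ '' (C : Set (Ω → F)) = C
    conv_lhs => rw [← ha]
    rw [← Set.image_comp]
    have h : (permAct a⁻¹ ∘ permAct a : (Ω → F) → Ω → F) = id := by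
      funext f ω
      simp [permAct, Equiv.Perm.inv_def]
    rw [h, Set.image_id]

/-- The 2-closure of a permutation group `G ≤ Sym(Ω)`: all permutations mapping each
`G`-orbit on `Ω × Ω` onto itself. -/
def twoClosure {Ω : Type*} (G : Subgroup (Equiv.Perm Ω)) : Subgroup (Equiv.Perm Ω) where
  carrier := {g | ∀ α β : Ω, ∃ h ∈ G, g α = h α ∧ g β = h β}
  one_mem' := fun α β => ⟨1, G.one_mem, rfl, rfl⟩
  mul_mem' := by
    intro a b ha hb α β
    obtain ⟨h, hh, h1, h2⟩ := hb α β
    obtain ⟨k, hk, k1, k2⟩ := ha (h α) (h β)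
    exact ⟨k * h, G.mul_mem hk hh, by simp [Equiv.Perm.mul_apply, h1, k1],
      by simp [Equiv.Perm.mul_apply, h2, k2]⟩
  inv_mem' := by
    intro a ha α β
    obtain ⟨h, hh, h1, h2⟩ := ha (a⁻¹ α) (a⁻¹ β)
    refine ⟨h⁻¹, G.inv_mem hh, ?_, ?_⟩
    · have := congrArg (fun z => h⁻¹ z) h1
      simpa using this.symm
    · have := congrArg (fun z => h⁻¹ z) h2
      simpa using this.symm

/-!
Let `H ≤ Sym(Ω)` be the image of the Sylow `r`-subgroup. Since `|H|` is a power of `r`, it is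
invertible in `F`, so averaging any projection onto `C` over `H` yields an `H`-equivariant
projection onto `C`. A linear map of `F^Ω` commuting with `H` has an `H`-invariant matrix, so it
commutes with the 2-closure `H^(2)` too; hence `H^(2)` preserves its range `C`, i.e.
`H^(2) ≤ PAut(C)`. By Wielandt's theorem the 2-closure of an `r`-group is an `r`-group, so the
maximality of Sylow subgroups forces `H^(2) = H`.
-/

open Equiv MulAction Subgroup

namespace Representation

variable {k G V : Type*} [Field k] [Group G] [AddCommGroup V] [Module k V]

theorem exists_isProj_isIntertwiningMap [Finite G] (hG : (Nat.card G : k) ≠ 0)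
    (ρ : Representation k G V) (W : Submodule k V) (hW : ∀ g, ∀ w ∈ W, ρ g w ∈ W) :
    ∃ π : V →ₗ[k] V, LinearMap.IsProj W π ∧ ρ.IsIntertwiningMap ρ π := by
  have := Fintype.ofFinite G
  rw [Nat.card_eq_fintype_card] at hG
  have := invertibleOfNonzero hG
  obtain ⟨W', hW'⟩ := W.exists_isCompl
  set π₀ := W.projection W' hW'
  have hπ₀ : ∀ v, π₀ v ∈ W := W.projection_apply_mem hW'
  refine ⟨(linHom ρ ρ).averageMap π₀, ⟨fun v => ?_, fun w hw => ?_⟩,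
    (mem_linHom_invariants_iff_isIntertwining _).mp ((linHom ρ ρ).averageMap_invariant π₀)⟩
  · simpa [GroupAlgebra.average, map_sum] using
      W.sum_mem fun g _ => hW g _ (hπ₀ (ρ g⁻¹ v))
  · have hg : ∀ g : G, ρ g (π₀ (ρ g⁻¹ w)) = w := fun g => by
      rw [Submodule.projection_apply_of_mem_left hW' (hW _ _ hw), ← Module.End.mul_apply, ← map_mul,
        mul_inv_cancel, map_one, Module.End.one_apply]
    simp [GroupAlgebra.average, map_sum, hg, ← Nat.cast_smul_eq_nsmul k, smul_smul, hG]

end Representation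

section PermAct

variable {R Ω : Type*}

lemma permAct_permAct_inv (g : Perm Ω) (f : Ω → R) : permAct g (permAct g⁻¹ f) = f :=
  funext fun x => congrArg f (g.apply_symm_apply x)

lemma permAct_single [DecidableEq Ω] [Zero R] (g : Perm Ω) (β : Ω) (x : R) :
    permAct g (Pi.single β x) = Pi.single (g β) x :=
  Pi.single_comp_equiv g.symm β x

variable (R Ω) in
def permRep [CommSemiring R] : Representation R (Perm Ω) (Ω → R) where
  toFun g := LinearMap.funLeft R R g.symm
  map_one' := rfl
  map_mul' _ _ := rfl

theorem map_permAct_of_mem_twoClosure [Finite Ω] [CommSemiring R] {G : Subgroup (Perm Ω)}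
    {A : (Ω → R) →ₗ[R] (Ω → R)} (hA : ∀ h ∈ G, ∀ f, A (permAct h f) = permAct h (A f))
    {g : Perm Ω} (hg : g ∈ twoClosure G) (f : Ω → R) : A (permAct g f) = permAct g (A f) := by
  classical
  suffices A ∘ₗ permRep R Ω g = permRep R Ω g ∘ₗ A from LinearMap.congr_fun this f
  refine LinearMap.pi_ext fun β x => funext fun α => ?_
  obtain ⟨h, hh, hα, hβ⟩ := hg (g⁻¹ α) β
  rw [← Perm.mul_apply, mul_inv_cancel, Perm.one_apply, eq_comm] at hα
  calc A (permAct g (Pi.single β x)) α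
      = A (permAct h (Pi.single β x)) (h (g⁻¹ α)) := by rw [permAct_single, permAct_single, hβ, hα]
    _ = A (Pi.single β x) (g⁻¹ α) := by rw [hA h hh]; simp [permAct]
    _ = permAct g (A (Pi.single β x)) α := rfl

end PermAct

section PAut

variable {Ω F : Type*} [Field F]

lemma permAct_mem_of_mem_PAut {C : Submodule F (Ω → F)} {g : Perm Ω} (hg : g ∈ PAut C)
    {f : Ω → F} (hf : f ∈ C) : permAct g f ∈ C :=
  (show permAct g '' (C : Set (Ω → F)) = C from hg).subset ⟨f, hf, rfl⟩

theorem twoClosure_le_PAut [Finite Ω] {C : Submodule F (Ω → F)} {H : Subgroup (Perm Ω)}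
    (hH : H ≤ PAut C) (hcard : (Nat.card H : F) ≠ 0) : twoClosure H ≤ PAut C := by
  obtain ⟨π, hπ, hπH⟩ := Representation.exists_isProj_isIntertwiningMap hcard
    ((permRep F Ω).comp H.subtype) C fun h _ hf => permAct_mem_of_mem_PAut (hH h.2) hf
  have hmaps : ∀ g ∈ twoClosure H, ∀ f ∈ C, permAct g f ∈ C := fun g hg f hf => by
    rw [← hπ.map_id f hf,
      ← map_permAct_of_mem_twoClosure (fun h hh f => hπH.isIntertwining ⟨h, hh⟩ f) hg]
    exact hπ.map_mem _
  refine fun g hg => subset_antisymm ?_ fun f hf => ?_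
  · rintro _ ⟨f, hf, rfl⟩
    exact hmaps g hg f hf
  · exact ⟨permAct g⁻¹ f, hmaps _ (inv_mem hg) f hf, permAct_permAct_inv g f⟩

end PAut

section TwoClosure

variable {Ω : Type*}

lemma le_twoClosure (G : Subgroup (Perm Ω)) : G ≤ twoClosure G :=
  fun h hh _ _ => ⟨h, hh, rfl, rfl⟩

lemma twoClosure_bot : twoClosure (⊥ : Subgroup (Perm Ω)) = ⊥ := by
  refine eq_bot_iff.mpr fun g hg => mem_bot.mpr (Equiv.ext fun a => ?_)
  obtain ⟨h, hh, ha, -⟩ := hg a a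
  rw [ha, mem_bot.mp hh]

lemma twoClosure_le_centralizer {G A : Subgroup (Perm Ω)} (hA : A ≤ centralizer G) :
    twoClosure G ≤ centralizer A := by
  refine fun g hg => mem_centralizer_iff.mpr fun k hk => Equiv.ext fun a => ?_
  obtain ⟨h, hh, ha, hka⟩ := hg a (k a)
  have hkh : h * k = k * h := mem_centralizer_iff.mp (hA hk) h hh
  rw [Perm.mul_apply, Perm.mul_apply, ha, hka, ← Perm.mul_apply, ← hkh, Perm.mul_apply]

instance (A : Subgroup (Perm Ω)) :
    MulAction (centralizer (A : Set (Perm Ω))) (orbitRel.Quotient A Ω) where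
  smul g := Quotient.map' (g : Perm Ω) fun a b ⟨k, hk⟩ => ⟨k, by
    change (k : Perm Ω) ((g : Perm Ω) b) = (g : Perm Ω) a
    rw [← hk, ← Perm.mul_apply, mem_centralizer_iff.mp g.2 k k.2]
    rfl⟩
  one_smul := Quotient.ind fun _ => rfl
  mul_smul _ _ := Quotient.ind fun _ => rfl

lemma card_orbitRel_quotient_lt [Finite Ω] {A : Subgroup (Perm Ω)} (hA : A ≠ ⊥) :
    Nat.card (orbitRel.Quotient A Ω) < Nat.card Ω := by
  obtain ⟨k, hk, hk1⟩ := (bot_or_exists_ne_one A).resolve_left hA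
  obtain ⟨a, ha⟩ := not_forall.mp fun h => hk1 (Equiv.ext h)
  have hsurj : Function.Surjective (Quotient.mk (orbitRel A Ω)) := Quotient.mk_surjective
  refine (Nat.card_le_card_of_surjective _ hsurj).lt_of_ne fun h => ha ?_
  exact (hsurj.bijective_of_nat_card_le h.ge).injective
    (orbitRel.Quotient.quotient_smul_eq (g := (⟨k, hk⟩ : A)))

lemma pow_eq_one_of_forall_mem_orbit {A : Subgroup (Perm Ω)} {x : Perm Ω}
    (hx : x ∈ centralizer A) (horb : ∀ a, x a ∈ orbit A a) {n : ℕ}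
    (hn : ∀ k ∈ A, k ^ n = 1) : x ^ n = 1 := by
  ext a
  obtain ⟨k, hk⟩ := horb a
  have hpow : ∀ i : ℕ, (x ^ i) a = ((k : Perm Ω) ^ i) a := by
    intro i
    induction i with
    | zero => rfl
    | succ i ih =>
      rw [pow_succ, Perm.mul_apply, ← hk, pow_succ', Perm.mul_apply, ← ih]
      change (x ^ i) ((k : Perm Ω) a) = _
      rw [← Perm.mul_apply, ← mem_centralizer_iff.mp (pow_mem hx i) k k.2, Perm.mul_apply]
  rw [hpow, hn k k.2, Perm.one_apply]

lemma toPermHom_mem_twoClosure {G A : Subgroup (Perm Ω)} (hGA : G ≤ centralizer A)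
    {g : centralizer (A : Set (Perm Ω))} (hg : (g : Perm Ω) ∈ twoClosure G) :
    toPermHom _ (orbitRel.Quotient A Ω) g ∈
      twoClosure ((G.subgroupOf (centralizer A)).map (toPermHom _ _)) := by
  rintro ⟨a⟩ ⟨b⟩
  obtain ⟨h, hh, ha, hb⟩ := hg a b
  let h' : centralizer (A : Set (Perm Ω)) := ⟨h, hGA hh⟩
  exact ⟨toPermHom _ _ h', ⟨h', hh, rfl⟩, congrArg (Quot.mk _) ha, congrArg (Quot.mk _) hb⟩

/-- Wielandt: induct on `|Ω|`, passing to the orbits of the center `A` of `G`. The 2-closure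
centralizes `A`, so it acts on these orbits inside the 2-closure of the induced `p`-group; a
`p`-power of `g` thus fixes every `A`-orbit, and a further `|A|`-th power is trivial. -/
theorem isPGroup_twoClosure {p : ℕ} [Fact p.Prime] [Finite Ω] {G : Subgroup (Perm Ω)}
    (hG : IsPGroup p G) : IsPGroup p (twoClosure G) := by
  induction hn : Nat.card Ω using Nat.strong_induction_on generalizing Ω with
  | _ n ih =>
  obtain rfl | hGnt := G.bot_or_nontrivial
  · rw [twoClosure_bot]
    exact IsPGroup.of_bot
  set A := (center G).map G.subtype
  have hAG : A ≤ centralizer G := by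
    rintro _ ⟨z, hz, rfl⟩
    exact mem_centralizer_iff.mpr fun h hh => congrArg Subtype.val (mem_center_iff.mp hz ⟨h, hh⟩)
  have hA : A ≠ ⊥ := by
    have := hG.center_nontrivial
    rw [Ne, map_eq_bot_iff_of_injective _ G.subtype_injective]
    exact (center G).nontrivial_iff_ne_bot.mp this
  obtain ⟨e, he⟩ := IsPGroup.iff_card.mp (hG.to_le (map_subtype_le (center G)))
  have hGA : G ≤ centralizer A := le_centralizer_iff.mp hAG
  have hQ := ih _ (hn ▸ card_orbitRel_quotient_lt hA)
    ((hG.comap_subtype (K := centralizer A)).map (toPermHom _ (orbitRel.Quotient A Ω))) rfl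
  rintro ⟨g, hg⟩
  have hgA := twoClosure_le_centralizer hAG hg
  obtain ⟨k, hk⟩ := hQ ⟨_, toPermHom_mem_twoClosure (g := ⟨g, hgA⟩) hGA hg⟩
  have hk' : toPermHom _ (orbitRel.Quotient A Ω)
      ((⟨g, hgA⟩ : centralizer (A : Set (Perm Ω))) ^ p ^ k) = 1 := by
    rw [map_pow]
    exact congrArg Subtype.val hk
  have horb : ∀ a, (g ^ p ^ k) a ∈ orbit A a := fun a =>
    orbitRel_apply.mp (Quotient.exact (Equiv.ext_iff.mp hk' ⟦a⟧))
  refine ⟨k + e, Subtype.ext ?_⟩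
  rw [pow_add, pow_mul]
  refine pow_eq_one_of_forall_mem_orbit (pow_mem hgA _) horb fun z hz => ?_
  rw [← he]
  exact congrArg Subtype.val (pow_card_eq_one' (x := (⟨z, hz⟩ : A)))

end TwoClosure

lemma Nat.Prime.cast_ne_zero_of_ne_ringChar {R : Type*} [NonAssocSemiring R] [Nontrivial R]
    {r : ℕ} (hr : r.Prime) (h : r ≠ ringChar R) : (r : R) ≠ 0 := fun h0 =>
  h ((hr.eq_one_or_self_of_dvd _ ((ringChar.spec R r).mp h0)).resolve_left
    CharP.ringChar_ne_one).symm

theorem Sylow.eq_map_subtype_of_le {p : ℕ} {G : Type*} [Group G] {S : Subgroup G} (P : Sylow p S)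
    {K : Subgroup G} (hK : IsPGroup p K) (hPK : (P : Subgroup S).map S.subtype ≤ K)
    (hKS : K ≤ S) : K = (P : Subgroup S).map S.subtype := by
  have hP : K.subgroupOf S = P := P.is_maximal' hK.comap_subtype fun x hx => hPK ⟨x, hx, rfl⟩
  rw [← hP, subgroupOf_map_subtype, inf_of_le_left hKS]

theorem sylow_of_paut_is_two_closed_general
    {Ω F : Type*} [Fintype Ω] [Field F]
    (C : Submodule F (Ω → F))
    (r : ℕ) (hr : r.Prime) (hrchar : r ≠ ringChar F)
    (P : Sylow r (PAut C)) :
    twoClosure (Subgroup.map (PAut C).subtype (P : Subgroup (PAut C))) =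
      Subgroup.map (PAut C).subtype (P : Subgroup (PAut C)) := by
  have := Fact.mk hr
  set H := (P : Subgroup (PAut C)).map (PAut C).subtype
  have hH : IsPGroup r H := P.isPGroup'.map _
  obtain ⟨m, hm⟩ := IsPGroup.iff_card.mp hH
  have hcard : (Nat.card H : F) ≠ 0 := by
    rw [hm, Nat.cast_pow]
    exact pow_ne_zero _ (hr.cast_ne_zero_of_ne_ringChar hrchar)
  exact P.eq_map_subtype_of_le (isPGroup_twoClosure hH) (le_twoClosure H)
    (twoClosure_le_PAut (map_subtype_le _) hcard)

/-- Let `C ≤ F^Ω` be a linear code and `r` a prime different from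
the characteristic of the finite field `F`.  Then every Sylow `r`-subgroup of
`PAut(C)` is 2-closed. -/
theorem sylow_of_paut_is_two_closed
    {Ω F : Type*} [Fintype Ω] [DecidableEq Ω] [Field F] [Fintype F]
    (C : Submodule F (Ω → F))
    (r : ℕ) (hr : r.Prime) (hrchar : r ≠ ringChar F)
    (P : Sylow r (PAut C)) :
    twoClosure (Subgroup.map (PAut C).subtype (P : Subgroup (PAut C))) =
      Subgroup.map (PAut C).subtype (P : Subgroup (PAut C)) :=
  sylow_of_paut_is_two_closed_general C r hr hrchar P
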